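/- Let n ≥ 2 and μ ∈ [0,1). With H the Hamiltonian of the circular restricted three body problem and U the effective potential on ℝⁿ \ {E,M}, a point (q,p) with q ∈ ℝⁿ \ {E,M} is a critical point of H (i.e. the Fréchet derivative of H vanishes at (q,p)) if and only if q is a critical point of U and p = (−q₂, q₁, 0, …, 0). In particular, the footpoint projection (q,p) ↦ q restricts to a bijection between the critical points of H and the critical points of U. -/

import Mathlib

/-- The position of the earth, `E = μe₁`, in `ℝⁿ` (here the dimension is `n + 2 ≥ 2`,
with `0`-based coordinates). -/
noncomputable def earthPos (n : ℕ) (μ : ℝ) : EuclideanSpace ℝ (Fin (n + 2)) :=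
  EuclideanSpace.single 0 μ

/-- The position of the moon, `M = −(1−μ)e₁`. -/
noncomputable def moonPos (n : ℕ) (μ : ℝ) : EuclideanSpace ℝ (Fin (n + 2)) :=
  EuclideanSpace.single 0 (-(1 - μ))

/-- The Hamiltonian of the circular restricted three body problem in rotating
coordinates, as a function of `(q, p)`. -/
noncomputable def threeBodyH (n : ℕ) (μ : ℝ)
    (x : EuclideanSpace ℝ (Fin (n + 2)) × EuclideanSpace ℝ (Fin (n + 2))) : ℝ :=
  (1 / 2) * ‖x.2‖ ^ 2 - (1 - μ) / ‖x.1 - earthPos n μ‖ - μ / ‖x.1 - moonPos n μ‖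
    + (x.2 0 * x.1 1 - x.2 1 * x.1 0)

/-- The effective potential
`U(q) = −(1−μ)/|q−E| − μ/|q−M| − (1/2)(q₁² + q₂²)`. -/
noncomputable def effPotential (n : ℕ) (μ : ℝ)
    (q : EuclideanSpace ℝ (Fin (n + 2))) : ℝ :=
  -((1 - μ) / ‖q - earthPos n μ‖) - μ / ‖q - moonPos n μ‖ - (1 / 2) * (q 0 ^ 2 + q 1 ^ 2)


/-!
Completing the square in `p` gives `H(q,p) = ½|p − ω(q)|² + U(q)` with `ω(q) = (−q₂, q₁, 0, …, 0)`
(`rotationField`), the velocity field of the rotating frame. The derivative of `H` at `(q,p)` evaluated on the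
direction `(0, p − ω(q))` is `|p − ω(q)|²`, so a critical point has `p = ω(q)`; there the square
term has vanishing derivative and what remains is `dU(q)`. Hence the critical set of `H` is the
graph of `ω` over the critical set of `U`.
-/

open ContinuousLinearMap

section HalfNormSq

variable {E F : Type*} [NormedAddCommGroup E] [NormedSpace ℝ E]
  [NormedAddCommGroup F] [InnerProductSpace ℝ F]

theorem hasFDerivAt_half_norm_sq_sub_add (A : E →L[ℝ] F) {f : E → ℝ} {f' : E →L[ℝ] ℝ} {x : E}
    (hf : HasFDerivAt f f' x) (p : F) :
    HasFDerivAt (fun z : E × F => (1 / 2) * ‖z.2 - A z.1‖ ^ 2 + f z.1)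
      ((innerSL ℝ (p - A x)).comp (snd ℝ E F - A.comp (fst ℝ E F)) + f'.comp (fst ℝ E F))
      (x, p) := by
  have hL : HasFDerivAt (fun z : E × F => z.2 - A z.1) (snd ℝ E F - A.comp (fst ℝ E F)) (x, p) :=
    (snd ℝ E F - A.comp (fst ℝ E F)).hasFDerivAt
  have h := (hL.norm_sq.const_mul (1 / 2)).add (hf.comp (x, p) hasFDerivAt_fst)
  have half_two : (1 / 2 : ℝ) • (2 : ℕ) •
      (innerSL ℝ (p - A x)).comp (snd ℝ E F - A.comp (fst ℝ E F)) =
      (innerSL ℝ (p - A x)).comp (snd ℝ E F - A.comp (fst ℝ E F)) := by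
    rw [← Nat.cast_smul_eq_nsmul ℝ, smul_smul]
    norm_num
  rw [half_two] at h
  exact h

theorem fderiv_half_norm_sq_sub_add_eq_zero_iff (A : E →L[ℝ] F) {f : E → ℝ} {x : E}
    (hf : DifferentiableAt ℝ f x) (p : F) :
    fderiv ℝ (fun z : E × F => (1 / 2) * ‖z.2 - A z.1‖ ^ 2 + f z.1) (x, p) = 0 ↔
      fderiv ℝ f x = 0 ∧ p = A x := by
  rw [(hasFDerivAt_half_norm_sq_sub_add A hf.hasFDerivAt p).fderiv]
  constructor
  · intro h
    have hp : p = A x := by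
      simpa [← inner_sub_left, sub_eq_zero] using congr($h (0, p - A x))
    refine ⟨?_, hp⟩
    ext v
    simpa [hp] using congr($h (v, 0))
  · rintro ⟨hf', rfl⟩
    simp [hf']

end HalfNormSq

theorem Set.bijOn_fst_graphOn {α β : Type*} (f : α → β) (s : Set α) :
    Set.BijOn Prod.fst (s.graphOn f) s := by
  simpa only [Set.image_fst_graphOn] using (Set.fst_injOn_graph (f := f) (s := s)).bijOn_image

noncomputable def rotationField (n : ℕ) :
    EuclideanSpace ℝ (Fin (n + 2)) →L[ℝ] EuclideanSpace ℝ (Fin (n + 2)) :=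
  (EuclideanSpace.proj 0).smulRight (EuclideanSpace.single 1 1)
    - (EuclideanSpace.proj 1).smulRight (EuclideanSpace.single 0 1)

section RotationField

variable {n : ℕ}

theorem Fin.eq_zero_or_eq_one_or_two_le (i : Fin (n + 2)) : i = 0 ∨ i = 1 ∨ 2 ≤ (i : ℕ) := by
  rcases i with ⟨_ | _ | k, hk⟩ <;> simp [Fin.ext_iff]

@[simp]
theorem rotationField_apply_zero (q : EuclideanSpace ℝ (Fin (n + 2))) :
    rotationField n q 0 = -q 1 := by
  simp [rotationField]

@[simp]
theorem rotationField_apply_one (q : EuclideanSpace ℝ (Fin (n + 2))) :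
    rotationField n q 1 = q 0 := by
  simp [rotationField]

theorem rotationField_apply_of_two_le (q : EuclideanSpace ℝ (Fin (n + 2))) {i : Fin (n + 2)}
    (hi : 2 ≤ (i : ℕ)) : rotationField n q i = 0 := by
  have h0 : i ≠ 0 := by rintro rfl; simp at hi
  have h1 : i ≠ 1 := by rintro rfl; simp at hi
  simp [rotationField, h0, h1]

theorem eq_rotationField_iff (q p : EuclideanSpace ℝ (Fin (n + 2))) :
    p = rotationField n q ↔ p 0 = -q 1 ∧ p 1 = q 0 ∧ ∀ i : Fin (n + 2), 2 ≤ (i : ℕ) → p i = 0 := by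
  constructor
  · rintro rfl
    exact ⟨rotationField_apply_zero q, rotationField_apply_one q,
      fun i hi => rotationField_apply_of_two_le q hi⟩
  · rintro ⟨h0, h1, h2⟩
    ext i
    rcases i.eq_zero_or_eq_one_or_two_le with rfl | rfl | hi
    · rw [h0, rotationField_apply_zero]
    · rw [h1, rotationField_apply_one]
    · rw [h2 i hi, rotationField_apply_of_two_le q hi]

theorem inner_rotationField (p q : EuclideanSpace ℝ (Fin (n + 2))) :
    inner ℝ p (rotationField n q) = p 1 * q 0 - p 0 * q 1 := by
  simp only [rotationField, sub_apply, smulRight_apply, PiLp.proj_apply, inner_sub_right,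
    inner_smul_right, EuclideanSpace.inner_single_right, Real.ringHom_apply, one_mul]
  ring

theorem norm_rotationField_sq (q : EuclideanSpace ℝ (Fin (n + 2))) :
    ‖rotationField n q‖ ^ 2 = q 0 ^ 2 + q 1 ^ 2 := by
  rw [← real_inner_self_eq_norm_sq, inner_rotationField, rotationField_apply_zero,
    rotationField_apply_one]
  ring

theorem threeBodyH_eq_half_norm_sq_sub_add_effPotential (μ : ℝ)
    (x : EuclideanSpace ℝ (Fin (n + 2)) × EuclideanSpace ℝ (Fin (n + 2))) :
    threeBodyH n μ x = (1 / 2) * ‖x.2 - rotationField n x.1‖ ^ 2 + effPotential n μ x.1 := by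
  rw [threeBodyH, effPotential, norm_sub_sq_real, inner_rotationField, norm_rotationField_sq]
  ring

end RotationField

theorem differentiableAt_effPotential (n : ℕ) (μ : ℝ) {q : EuclideanSpace ℝ (Fin (n + 2))}
    (hE : q ≠ earthPos n μ) (hM : q ≠ moonPos n μ) :
    DifferentiableAt ℝ (effPotential n μ) q := by
  have hE' : ‖q - earthPos n μ‖ ≠ 0 := by simpa [sub_eq_zero] using hE
  have hM' : ‖q - moonPos n μ‖ ≠ 0 := by simpa [sub_eq_zero] using hM
  have dE : DifferentiableAt ℝ (fun q => ‖q - earthPos n μ‖) q :=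
    (differentiableAt_id.sub_const _).norm ℝ (sub_ne_zero.mpr hE)
  have dM : DifferentiableAt ℝ (fun q => ‖q - moonPos n μ‖) q :=
    (differentiableAt_id.sub_const _).norm ℝ (sub_ne_zero.mpr hM)
  unfold effPotential
  fun_prop (disch := assumption)

theorem fderiv_threeBodyH_eq_zero_iff (n : ℕ) (μ : ℝ) {q : EuclideanSpace ℝ (Fin (n + 2))}
    (p : EuclideanSpace ℝ (Fin (n + 2))) (hE : q ≠ earthPos n μ) (hM : q ≠ moonPos n μ) :
    fderiv ℝ (threeBodyH n μ) (q, p) = 0 ↔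
      fderiv ℝ (effPotential n μ) q = 0 ∧ p = rotationField n q := by
  rw [funext (threeBodyH_eq_half_norm_sq_sub_add_effPotential μ)]
  exact fderiv_half_norm_sq_sub_add_eq_zero_iff _ (differentiableAt_effPotential n μ hE hM) p

theorem critical_points_threeBodyH_general (n : ℕ) (μ : ℝ) :
    (∀ (q p : EuclideanSpace ℝ (Fin (n + 2))), q ≠ earthPos n μ → q ≠ moonPos n μ →
      (fderiv ℝ (threeBodyH n μ) (q, p) = 0 ↔
        (fderiv ℝ (effPotential n μ) q = 0 ∧
          p 0 = -q 1 ∧ p 1 = q 0 ∧ ∀ i : Fin (n + 2), 2 ≤ (i : ℕ) → p i = 0))) ∧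
    Set.BijOn (Prod.fst)
      {x : EuclideanSpace ℝ (Fin (n + 2)) × EuclideanSpace ℝ (Fin (n + 2)) |
        x.1 ≠ earthPos n μ ∧ x.1 ≠ moonPos n μ ∧ fderiv ℝ (threeBodyH n μ) x = 0}
      {q : EuclideanSpace ℝ (Fin (n + 2)) |
        q ≠ earthPos n μ ∧ q ≠ moonPos n μ ∧ fderiv ℝ (effPotential n μ) q = 0} := by
  refine ⟨fun q p hE hM => by
    rw [fderiv_threeBodyH_eq_zero_iff n μ p hE hM, eq_rotationField_iff], ?_⟩
  convert Set.bijOn_fst_graphOn (rotationField n) _ using 1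
  ext ⟨q, p⟩
  simp only [Set.mem_ofPred_eq, Set.mem_graphOn]
  constructor
  · rintro ⟨hE, hM, hcrit⟩
    obtain ⟨hU, rfl⟩ := (fderiv_threeBodyH_eq_zero_iff n μ p hE hM).mp hcrit
    exact ⟨⟨hE, hM, hU⟩, rfl⟩
  · rintro ⟨⟨hE, hM, hU⟩, rfl⟩
    exact ⟨hE, hM, (fderiv_threeBodyH_eq_zero_iff n μ _ hE hM).mpr ⟨hU, rfl⟩⟩

/-- A point `(q,p)` is a critical point of the Hamiltonian `H` iff `q` is a critical
point of the effective potential `U` and `p = (−q₂, q₁, 0, …, 0)`; in particular the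
footpoint projection restricts to a bijection between `crit H` and `crit U`. -/
theorem critical_points_threeBodyH (n : ℕ) (μ : ℝ) (hμ : μ ∈ Set.Ico (0 : ℝ) 1) :
    (∀ (q p : EuclideanSpace ℝ (Fin (n + 2))), q ≠ earthPos n μ → q ≠ moonPos n μ →
      (fderiv ℝ (threeBodyH n μ) (q, p) = 0 ↔
        (fderiv ℝ (effPotential n μ) q = 0 ∧
          p 0 = -q 1 ∧ p 1 = q 0 ∧ ∀ i : Fin (n + 2), 2 ≤ (i : ℕ) → p i = 0))) ∧
    Set.BijOn (Prod.fst)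
      {x : EuclideanSpace ℝ (Fin (n + 2)) × EuclideanSpace ℝ (Fin (n + 2)) |
        x.1 ≠ earthPos n μ ∧ x.1 ≠ moonPos n μ ∧ fderiv ℝ (threeBodyH n μ) x = 0}
      {q : EuclideanSpace ℝ (Fin (n + 2)) |
        q ≠ earthPos n μ ∧ q ≠ moonPos n μ ∧ fderiv ℝ (effPotential n μ) q = 0} :=
  critical_points_threeBodyH_general n μ
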